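/- arXiv:2204.00733 — 3 statements merged into one kernel-verified Lean document; each statement's English description precedes it below -/
import Mathlib

section
/- With A, B as above satisfying A = −σ₃Bσ₃, the matrix-valued function H(z) = I + A/(z − √(2/3)) + B/(z + √(2/3)) satisfies det H(z) = 1 identically (for z ≠ ±√(2/3)). -/
/-!
With `p = (z - r)⁻¹`, `q = (z + r)⁻¹` and `B = -σ₃ A σ₃`, a direct expansion gives
`det (1 + p A + q B) = 1 + (p - q) tr A - 4 p q A₀₀ A₁₁ + (p + q)² det A`.
Since `p - q = 2 r p q`, this equals `1` as soon as `det A = 0` and `r tr A = 2 A₀₀ A₁₁`.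
For the explicit `A` both hold: the phases `e^{±πi/6} s₀^{±1} D_∞^{±2}` cancel in the
product of the off-diagonal entries, and `c/(c+√2) + c/(c-√2) = 2 · c/(c+√2) · c/(c-√2)`.
-/

open Complex Matrix

namespace Matrix

variable {R : Type*} [CommRing R]

def sigma3 : Matrix (Fin 2) (Fin 2) R := !![1, 0; 0, -1]

theorem neg_sigma3_mul_mul_sigma3 (A : Matrix (Fin 2) (Fin 2) R) :
    -(sigma3 * A * sigma3) = !![-A 0 0, A 0 1; A 1 0, -A 1 1] := by
  rw [eta_fin_two A]
  simp [sigma3]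

theorem det_one_add_smul_add_smul_neg_sigma3_conj (A : Matrix (Fin 2) (Fin 2) R) (p q : R) :
    (1 + p • A + q • -(sigma3 * A * sigma3)).det
      = 1 + (p - q) * A.trace - 4 * p * q * (A 0 0 * A 1 1) + (p + q) ^ 2 * A.det := by
  rw [neg_sigma3_mul_mul_sigma3, eta_fin_two A]
  simp only [smul_of, smul_cons, smul_eq_mul, smul_empty, of_apply, cons_val', cons_val_zero,
    cons_val_fin_one, cons_val_one, mul_neg, det_fin_two, add_apply, one_apply_eq, ne_eq,
    zero_ne_one, not_false_eq_true, one_apply_ne, zero_add, one_ne_zero, trace_fin_two]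
  ring

theorem det_one_add_inv_smul_add_inv_smul_eq_one {K : Type*} [Field K]
    (A B : Matrix (Fin 2) (Fin 2) K) (hB : B = -(sigma3 * A * sigma3)) (r z : K)
    (hdet : A.det = 0) (htrace : r * A.trace = 2 * (A 0 0 * A 1 1))
    (hzr : z - r ≠ 0) (hzr' : z + r ≠ 0) :
    (1 + (z - r)⁻¹ • A + (z + r)⁻¹ • B).det = 1 := by
  have hpq : (z - r)⁻¹ - (z + r)⁻¹ = 2 * r * (z - r)⁻¹ * (z + r)⁻¹ := by
    field_simp
    ring
  rw [hB, det_one_add_smul_add_smul_neg_sigma3_conj, hpq, hdet]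
  linear_combination 2 * (z - r)⁻¹ * (z + r)⁻¹ * htrace

end Matrix

theorem stmt_8 (c s0 Dinf : ℂ) (hs0 : s0 ≠ 0) (hD : Dinf ≠ 0)
    (hc1 : c ≠ (Real.sqrt 2 : ℂ)) (hc2 : c ≠ -(Real.sqrt 2 : ℂ))
    (A B : Matrix (Fin 2) (Fin 2) ℂ)
    (hA : A = (Real.sqrt (2/3) : ℂ) •
      !![c / (c + (Real.sqrt 2 : ℂ)),
         -Complex.exp (-(Real.pi : ℂ) * Complex.I / 6) * c * s0⁻¹ * (Dinf^2)⁻¹ /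
           ((Real.sqrt 2 : ℂ) + c);
         Complex.exp ((Real.pi : ℂ) * Complex.I / 6) * c * s0 * Dinf^2 /
           ((Real.sqrt 2 : ℂ) - c),
         c / (c - (Real.sqrt 2 : ℂ))])
    (hB : B = (Real.sqrt (2/3) : ℂ) •
      !![-(c / (c + (Real.sqrt 2 : ℂ))),
         -Complex.exp (-(Real.pi : ℂ) * Complex.I / 6) * c * s0⁻¹ * (Dinf^2)⁻¹ /
           ((Real.sqrt 2 : ℂ) + c);
         Complex.exp ((Real.pi : ℂ) * Complex.I / 6) * c * s0 * Dinf^2 /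
           ((Real.sqrt 2 : ℂ) - c),
         -(c / (c - (Real.sqrt 2 : ℂ)))])
    (z : ℂ) (hz1 : z ≠ (Real.sqrt (2/3) : ℂ)) (hz2 : z ≠ -(Real.sqrt (2/3) : ℂ)) :
    Matrix.det (1 + (z - (Real.sqrt (2/3) : ℂ))⁻¹ • A + (z + (Real.sqrt (2/3) : ℂ))⁻¹ • B)
      = 1 := by
  set s : ℂ := ((Real.sqrt 2 : ℝ) : ℂ)
  set r : ℂ := ((Real.sqrt (2/3) : ℝ) : ℂ)
  have hcs : c - s ≠ 0 := sub_ne_zero.mpr hc1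
  have hcs' : c + s ≠ 0 := by rwa [← sub_neg_eq_add, sub_ne_zero]
  have hsc : s - c ≠ 0 := sub_ne_zero.mpr hc1.symm
  have hsc' : s + c ≠ 0 := by rwa [add_comm]
  have hexp : exp (-(Real.pi * I / 6)) * exp (Real.pi * I / 6) = 1 := by
    rw [← exp_add, neg_add_cancel, exp_zero]
  refine det_one_add_inv_smul_add_inv_smul_eq_one A B ?_ r z ?_ ?_
    (sub_ne_zero.mpr hz1) (by rwa [← sub_neg_eq_add, sub_ne_zero])
  · rw [neg_sigma3_mul_mul_sigma3, hA, hB]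
    simp
  · rw [hA, det_smul, det_fin_two_of, Fintype.card_fin]
    field_simp
    linear_combination r ^ 2 * c ^ 2 * (c + s) * (c - s) * hexp
  · rw [hA, trace_fin_two]
    simp only [Matrix.smul_apply, of_apply, cons_val', cons_val_zero, cons_val_fin_one,
      cons_val_one, smul_eq_mul]
    field_simp
    ring
end

section
/- Let α ∈ ℝ with α − 1/2 ∉ ℤ, κ* = 1/(√π Γ(α + 1/2)), and define ρ(κ) = 1 − 2π^{3/2} κ /(e^{πiα} Γ(1/2 − α)) for κ ∈ ℝ. Then |ρ(κ)| > 1 if and only if κ(κ − κ*) > 0. -/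
/-! Write `ρ = 1 - z` with `z = (2π^{3/2}κ / Γ(1/2 - α)) e^{-iπα}`, so that
`‖ρ‖² - 1 = ‖z‖² - 2 Re z`. The reflection formula gives
`cos (πα) = π / (Γ(1/2 - α) Γ(1/2 + α))`, and with it
`‖z‖² - 2 Re z = (2π^{3/2} / Γ(1/2 - α))² κ (κ - κ*)`. -/

open Complex
open scoped Real

theorem Complex.one_lt_norm_one_sub_iff (z : ℂ) : 1 < ‖1 - z‖ ↔ 2 * z.re < ‖z‖ ^ 2 := by
  rw [← one_lt_sq_iff₀ (norm_nonneg _), Complex.sq_norm, Complex.sq_norm, normSq_sub]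
  simp only [map_one, one_mul, conj_re]
  constructor <;> intro h <;> linarith

theorem Complex.re_ofReal_div_exp_mul_I_mul_ofReal (x θ g : ℝ) :
    ((x : ℂ) / (exp (θ * I) * g)).re = x / g * Real.cos θ := by
  rcases eq_or_ne g 0 with rfl | hg
  · simp
  rw [div_re]
  simp only [ofReal_re, mul_re, exp_ofReal_mul_I_re, exp_ofReal_mul_I_im, ofReal_im, mul_zero,
    sub_zero, normSq_apply, mul_im, zero_add, zero_mul, zero_div, add_zero]
  field_simp
  rw [Real.cos_sq_add_sin_sq, mul_one]

theorem Complex.norm_ofReal_div_exp_mul_I_mul_ofReal (x θ g : ℝ) :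
    ‖(x : ℂ) / (exp (θ * I) * g)‖ = |x / g| := by
  rw [norm_div, norm_mul, norm_exp_ofReal_mul_I, one_mul, norm_real, norm_real, abs_div]
  rfl

-- No hypothesis on `α`: where `cos (π * α) = 0` the reflection formula reads `Γ Γ = π / 0 = 0`.
theorem Real.cos_pi_mul_eq_pi_div_Gamma_mul_Gamma (α : ℝ) :
    Real.cos (π * α) = π / (Real.Gamma (1/2 - α) * Real.Gamma (α + 1/2)) := by
  have h := Real.Gamma_mul_Gamma_one_sub (1/2 - α)
  rw [show 1 - (1/2 - α) = α + 1/2 by ring, show π * (1/2 - α) = π/2 - π * α by ring,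
    Real.sin_pi_div_two_sub] at h
  rw [h, div_div_cancel₀ Real.pi_ne_zero]

theorem Real.Gamma_one_half_sub_ne_zero {α : ℝ} (hα : ∀ n : ℤ, α - 1/2 ≠ n) :
    Real.Gamma (1/2 - α) ≠ 0 :=
  Real.Gamma_ne_zero fun m h => hα m (by push_cast; linarith)

theorem stmt_14 (α : ℝ) (hα : ∀ n : ℤ, α - 1/2 ≠ (n : ℝ)) (κ : ℝ)
    (κstar : ℝ) (hκstar : κstar = 1 / (Real.sqrt Real.pi * Real.Gamma (α + 1/2)))
    (ρ : ℂ)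
    (hρ : ρ = 1 - ((2 * Real.pi * Real.sqrt Real.pi * κ : ℝ) : ℂ) /
      (Complex.exp ((Real.pi : ℂ) * Complex.I * (α : ℂ)) *
        Complex.Gamma ((1 : ℂ)/2 - (α : ℂ)))) :
    1 < ‖ρ‖ ↔ κ * (κ - κstar) > 0 := by
  have hg := Real.Gamma_one_half_sub_ne_zero hα
  have hρ_real : ρ = 1 - ((2 * π * √π * κ : ℝ) : ℂ) /
      (exp ((π * α : ℝ) * I) * (Real.Gamma (1/2 - α) : ℂ)) := by
    rw [hρ, show (1 : ℂ)/2 - α = (1/2 - α : ℝ) by push_cast; ring, Gamma_ofReal]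
    push_cast
    ring_nf
  have hkey : (2 * π * √π * κ / Real.Gamma (1/2 - α)) ^ 2 -
      2 * (2 * π * √π * κ / Real.Gamma (1/2 - α) * Real.cos (π * α)) =
      (2 * π * √π / Real.Gamma (1/2 - α)) ^ 2 * (κ * (κ - κstar)) := by
    rw [Real.cos_pi_mul_eq_pi_div_Gamma_mul_Gamma, hκstar]
    field_simp
  have hpos : 0 < (2 * π * √π / Real.Gamma (1/2 - α)) ^ 2 := by positivity
  rw [hρ_real, one_lt_norm_one_sub_iff, re_ofReal_div_exp_mul_I_mul_ofReal,
    norm_ofReal_div_exp_mul_I_mul_ofReal, sq_abs, ← sub_pos, hkey, gt_iff_lt,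
    mul_pos_iff_of_pos_left hpos]
end

section
/- Fix real constants b and ψ and define ϑ(x) = x²/√3 − b·ln(2√3 x²) + ψ for x < 0. If (a_n) is a sequence of negative reals with ϑ(a_n) = 2nπ + 2π/3 + O(1/n) as n → ∞, then a_n = −√(2π)·3^{1/4}·[√n + b ln n/(4π√n) + (b ln(12π) − ψ + 2π/3)/(4π√n) + O(ln²n / n^{3/2})]. -/
open Filter Real

noncomputable def theta (b ψ x : ℝ) : ℝ :=
  x ^ 2 / Real.sqrt 3 - b * Real.log (2 * Real.sqrt 3 * x ^ 2) + ψ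

open Asymptotics Topology

/-! With `t n = a n ^ 2` and `K = 2√3π`, the hypothesis reads
`t n = K n + A + √3 b log (t n) + O(1/n)`. As `log t = o(t)`, first `t n ~ K n`; then
`log (t n) = log (K n) + O(t n / (K n) - 1)` gives `t n - K n = O(log n)`, and feeding this back
once more gives `t n = K n + √3 b log (K n) + A + O(log n / n)`. Finally `a n = -√(t n)`, and
`√t = √N + (t - N) / (2√N)` up to `(t - N)² / (2 N^{3/2})` turns this into the claim, using
`√K = √(2π) 3^{1/4}` and `√3 / (2K) = 1 / (4π)`. -/

lemma isBigO_one_log_natCast : (fun _ : ℕ => (1 : ℝ)) =O[atTop] fun n => log n :=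
  ((isLittleO_one_left_iff ℝ).2 <| tendsto_norm_atTop_atTop.comp <|
    tendsto_log_atTop.comp tendsto_natCast_atTop_atTop).isBigO

lemma isBigO_log_natCast_mul (f : ℕ → ℝ) : f =O[atTop] fun n => log n * f n := by
  simpa using isBigO_one_log_natCast.mul (isBigO_refl f atTop)

lemma abs_sqrt_sub_sqrt_sub_div_le {t N : ℝ} (ht : 0 ≤ t) (hN : 0 < N) :
    |√t - √N - (t - N) / (2 * √N)| ≤ (t - N) ^ 2 / (2 * N * √N) := by
  obtain ⟨s, hs0, rfl⟩ : ∃ s, 0 ≤ s ∧ t = s ^ 2 := ⟨√t, sqrt_nonneg t, (sq_sqrt ht).symm⟩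
  obtain ⟨m, hm0, rfl⟩ : ∃ m, 0 < m ∧ N = m ^ 2 :=
    ⟨√N, sqrt_pos.2 hN, (sq_sqrt hN.le).symm⟩
  rw [sqrt_sq hs0, sqrt_sq hm0.le]
  have hid : s - m - (s ^ 2 - m ^ 2) / (2 * m) = -((s - m) ^ 2 / (2 * m)) := by
    field_simp; ring
  rw [hid, abs_neg, abs_of_nonneg (by positivity), div_le_div_iff₀ (by positivity) (by positivity)]
  have hsm : m ^ 2 ≤ (s + m) ^ 2 := by nlinarith
  nlinarith [mul_le_mul_of_nonneg_left hsm (sq_nonneg (s - m))]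

lemma tendsto_div_of_eq_add_mul_log {K A β : ℝ} (hK : 0 < K) {t E : ℕ → ℝ}
    (ht : Tendsto t atTop atTop) (hE : E =O[atTop] fun _ => (1 : ℝ))
    (heq : ∀ n, t n = K * n + A + β * log (t n) + E n) :
    Tendsto (fun n => t n / (K * n)) atTop (𝓝 1) := by
  have htop : ∀ c : ℝ, (fun _ => c) =o[atTop] t := fun _ =>
    isLittleO_const_left.2 (.inr (tendsto_norm_atTop_atTop.comp ht))
  have hsub : (fun n => K * n - t n) =o[atTop] t := by
    have := ((htop A).add ((isLittleO_log_id_atTop.comp_tendsto ht).const_mul_left β)).add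
      (hE.trans_isLittleO (htop 1))
    exact this.neg_left.congr_left fun n => by simp only [Function.comp_apply]; linarith [heq n]
  refine (isEquivalent_iff_tendsto_one ?_).1 (IsLittleO.isEquivalent hsub).symm
  filter_upwards [eventually_gt_atTop 0] with n hn
  positivity

theorem isBigO_sub_of_eq_add_mul_log {K A β : ℝ} (hK : 0 < K) {t E : ℕ → ℝ}
    (ht : Tendsto t atTop atTop) (hE : E =O[atTop] fun n => 1 / (n : ℝ))
    (heq : ∀ n, t n = K * n + A + β * log (t n) + E n) :
    (fun n => t n - (K * n + β * log n + (A + β * log K))) =O[atTop]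
      fun n => log n / n := by
  have hn : ∀ᶠ n : ℕ in atTop, (0 : ℝ) < n :=
    tendsto_natCast_atTop_atTop.eventually_gt_atTop 0
  have hE1 : E =O[atTop] fun _ => (1 : ℝ) :=
    hE.trans (tendsto_one_div_atTop_nhds_zero_nat.isBigO_one ℝ)
  have hEn : E =O[atTop] fun n => log n / n := by
    simpa [div_eq_mul_inv] using hE.trans (isBigO_log_natCast_mul _)
  set r : ℕ → ℝ := fun n => t n / (K * n) with hr_def
  have hr : Tendsto r atTop (𝓝 1) := tendsto_div_of_eq_add_mul_log hK ht hE1 heq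
  have hlogr : (fun n => log (r n)) =O[atTop] fun n => r n - 1 := by
    simpa [Function.comp_def] using (hasDerivAt_log one_ne_zero).isBigO_sub.comp_tendsto hr
  have hlogt : ∀ᶠ n in atTop, log (t n) = log K + log n + log (r n) := by
    filter_upwards [hn, ht.eventually_gt_atTop 0] with n hn ht0
    rw [← log_mul hK.ne' hn.ne', ← log_mul (by positivity) (by positivity)]
    congr 1
    simp only [hr_def]
    field_simp
  have hD : (fun n => t n - K * n) =O[atTop] fun n => log n := by
    have hlogr1 : (fun n => log (r n)) =O[atTop] fun _ => (1 : ℝ) :=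
      hlogr.trans ((hr.sub_const 1).isBigO_one ℝ)
    have := (((isBigO_const_one ℝ (A + β * log K) atTop).add
      (hlogr1.const_mul_left β)).add hE1).trans isBigO_one_log_natCast
    refine (this.add ((isBigO_refl _ _).const_mul_left β)).congr' ?_ EventuallyEq.rfl
    filter_upwards [hlogt] with n hn
    rw [heq n, hn]; ring
  have hr1 : (fun n => r n - 1) =O[atTop] fun n => log n / n := by
    refine ((hD.mul (isBigO_refl (fun n : ℕ => (n : ℝ)⁻¹) atTop)).const_mul_left K⁻¹).congr'
      ?_ (Eventually.of_forall fun n => (div_eq_mul_inv (log n) (n : ℝ)).symm)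
    filter_upwards [hn] with n hn
    simp only [hr_def]; field_simp
  refine ((hlogr.trans hr1).const_mul_left β |>.add hEn).congr' ?_ EventuallyEq.rfl
  filter_upwards [hlogt] with n hn
  rw [heq n, hn]; ring

theorem isBigO_sqrt_sub {K β C : ℝ} (hK : 0 < K) {t : ℕ → ℝ} (ht : ∀ n, 0 ≤ t n)
    (h : (fun n => t n - (K * n + β * log n + C)) =O[atTop] fun n => log n / n) :
    (fun n => √(t n) - √K * (√n + (β * log n + C) / (2 * K * √n))) =O[atTop]
      fun n => log n ^ 2 / (n : ℝ) ^ ((3 : ℝ) / 2) := by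
  have hn : ∀ᶠ n : ℕ in atTop, (0 : ℝ) < n :=
    tendsto_natCast_atTop_atTop.eventually_gt_atTop 0
  have hD : (fun n => t n - K * n) =O[atTop] fun n => log n := by
    have hdiv : (fun n : ℕ => log n / n) =O[atTop] fun n => log n := by
      simpa [div_eq_mul_inv] using (isBigO_refl (fun n : ℕ => log n) atTop).mul
        (tendsto_inv_atTop_zero.comp tendsto_natCast_atTop_atTop |>.isBigO_one ℝ)
    have hB : (fun n : ℕ => β * log n + C) =O[atTop] fun n => log n :=
      ((isBigO_refl _ _).const_mul_left β).add
        ((isBigO_const_one ℝ C atTop).trans isBigO_one_log_natCast)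
    exact ((h.trans hdiv).add hB).congr_left fun n => by ring
  have hquad : (fun n => √(t n) - √(K * n) - (t n - K * n) / (2 * √(K * n))) =O[atTop]
      fun n => log n ^ 2 * (n * √n : ℝ)⁻¹ := by
    refine IsBigO.trans ?_ ((hD.pow 2).mul (isBigO_refl _ _))
    refine IsBigO.of_bound (2 * K * √K)⁻¹ ?_
    filter_upwards [hn] with n hn
    refine (abs_sqrt_sub_sqrt_sub_div_le (ht n) (by positivity)).trans_eq ?_
    rw [norm_mul, norm_pow, norm_inv, Real.norm_eq_abs, Real.norm_eq_abs,
      abs_of_pos (by positivity : (0 : ℝ) < n * √n), sq_abs, sqrt_mul hK.le]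
    field_simp
  have hlin : (fun n => (t n - (K * n + β * log n + C)) / (2 * √(K * n))) =O[atTop]
      fun n => log n ^ 2 * (n * √n : ℝ)⁻¹ := by
    refine (((h.mul (isBigO_refl (fun n : ℕ => (√n)⁻¹) atTop)).const_mul_left
      (2 * √K)⁻¹).trans (isBigO_log_natCast_mul _)).congr (fun n => ?_) (fun n => by ring)
    rw [sqrt_mul hK.le]
    field_simp
  refine (hquad.add hlin).congr' ?_ ?_
  · filter_upwards [hn] with n hn
    rw [sqrt_mul hK.le]
    field_simp
    linear_combination (β * log n + C) * sq_sqrt hK.le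
  · filter_upwards [hn] with n hn
    rw [show (3 : ℝ) / 2 = 1 + 1 / 2 by norm_num, rpow_add hn, rpow_one, ← sqrt_eq_rpow,
      div_eq_mul_inv]

lemma sq_eq_sqrt_three_mul_theta (b ψ : ℝ) {x : ℝ} (hx : x ≠ 0) :
    x ^ 2 = √3 * (theta b ψ x + b * log (2 * √3) + b * log (x ^ 2) - ψ) := by
  rw [theta, log_mul (by positivity) (pow_ne_zero 2 hx)]
  field_simp
  ring

lemma log_two_mul_sqrt_three_add : log (2 * √3) + log (2 * √3 * π) = log (12 * π) := by
  rw [← log_mul (by positivity) (by positivity)]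
  congr 1
  linear_combination (4 * π) * mul_self_sqrt (zero_le_three : (0 : ℝ) ≤ 3)

lemma sqrt_two_mul_sqrt_three_mul_pi : √(2 * √3 * π) = √(2 * π) * (3 : ℝ) ^ ((1 : ℝ) / 4) := by
  rw [show 2 * √3 * π = 2 * π * √3 by ring, sqrt_mul (by positivity)]
  congr 1
  rw [sqrt_eq_rpow, sqrt_eq_rpow, ← rpow_mul zero_le_three]
  norm_num

theorem stmt_16 (b ψ : ℝ) (a : ℕ → ℝ)
    (hneg : ∀ n, a n < 0)
    (hinf : Tendsto a atTop atBot)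
    (hasy : (fun n : ℕ => theta b ψ (a n) - (2 * n * Real.pi + 2 * Real.pi / 3))
      =O[atTop] fun n : ℕ => 1 / (n : ℝ)) :
    (fun n : ℕ => a n -
      (-(Real.sqrt (2 * Real.pi) * (3 : ℝ) ^ ((1 : ℝ)/4)) *
        (Real.sqrt n + b * Real.log n / (4 * Real.pi * Real.sqrt n) +
          (b * Real.log (12 * Real.pi) - ψ + 2 * Real.pi / 3) /
            (4 * Real.pi * Real.sqrt n))))
      =O[atTop] fun n : ℕ => (Real.log n) ^ 2 / (n : ℝ) ^ ((3 : ℝ)/2) := by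
  have hK : 0 < 2 * √3 * π := by positivity
  have ht : Tendsto (fun n => a n ^ 2) atTop atTop := by
    simpa [Function.comp_def] using
      (tendsto_pow_atTop two_ne_zero).comp (tendsto_neg_atBot_atTop.comp hinf)
  have hexp := isBigO_sqrt_sub hK (fun n => sq_nonneg (a n)) <|
    isBigO_sub_of_eq_add_mul_log hK ht (hasy.const_mul_left √3)
      (A := √3 * (2 * π / 3 + b * log (2 * √3) - ψ)) (β := √3 * b) fun n => by
        linear_combination sq_eq_sqrt_three_mul_theta b ψ (hneg n).ne
  refine hexp.neg_left.congr' ?_ EventuallyEq.rfl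
  filter_upwards [eventually_gt_atTop 0] with n hn
  have hsqrt : (0 : ℝ) < √n := sqrt_pos.2 (Nat.cast_pos.2 hn)
  rw [sqrt_sq_eq_abs, abs_of_neg (hneg n), sqrt_two_mul_sqrt_three_mul_pi,
    ← log_two_mul_sqrt_three_add]
  field_simp
  ring
end
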